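/- arXiv:1206.0895 — 5 statements merged into one kernel-verified Lean document; each statement's English description precedes it below -/
import Mathlib

section
/- Consider the classical Curie–Weiss model without external field, i.e. ν = δ_0 (so P_{n,β}^h is the Gibbs measure with all h_i = 0), and let β > 1. Let m > 0 be the unique positive solution of x = tanh(βx) and set σ² = (1−m²)/(1−β(1−m²)). Fix 1/2 < α < 1. If the sequence of laws of (S_n + n m)/n^α under P_{n,β}^h satisfies a moderate deviations principle with speed n^{2α−1} and rate function x ↦ x²/(2σ²), then limsup_n (1/n^{2α−1}) ln P_{n,β}^h( |(S_n − n m)/n^α| > 1 ) = 0; in particular, the sequence of laws of (S_n − n m)/n^α does not satisfy a moderate deviations principle with speed n^{2α−1} and rate function x ↦ x²/(2σ²). -/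
open MeasureTheory ProbabilityTheory Real Filter Topology
open scoped ENNReal NNReal

noncomputable section

/-- The value of a spin encoded as a Boolean. -/
def spin (b : Bool) : ℝ := if b then 1 else -1

/-- Total magnetization of a configuration. -/
def mag {n : ℕ} (σ : Fin n → Bool) : ℝ := ∑ i, spin (σ i)

/-- Gibbs weight of a configuration in the random field Curie-Weiss model. -/
def gibbsWeight (β : ℝ) (h : ℕ → ℝ) (n : ℕ) (σ : Fin n → Bool) : ℝ :=
  Real.exp (β / (2 * n) * (mag σ) ^ 2 + β * ∑ i : Fin n, h i * spin (σ i))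

/-- The random field Curie-Weiss Gibbs measure on configurations. -/
def gibbsMeasure (β : ℝ) (h : ℕ → ℝ) (n : ℕ) : Measure (Fin n → Bool) :=
  (ENNReal.ofReal (∑ σ : Fin n → Bool, gibbsWeight β h n σ))⁻¹ •
    ∑ σ : Fin n → Bool, ENNReal.ofReal (gibbsWeight β h n σ) • Measure.dirac σ

/-- `μ` is the infinite product of `ν` over `ℕ` (characterised by finite marginals). -/
def IsProductMeasure (ν : Measure ℝ) (μ : Measure (ℕ → ℝ)) : Prop :=
  ∀ n : ℕ, μ.map (fun h (i : Fin n) => h (i : ℕ)) = Measure.pi fun _ : Fin n => ν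

/-- extended logarithm, `elog 0 = ⊥`, `elog ⊤ = ⊤`. -/
def elog (x : ℝ≥0∞) : EReal :=
  if x = 0 then ⊥ else if x = ⊤ then ⊤ else ((Real.log x.toReal : ℝ) : EReal)

/-- A sequence of measures satisfies a large deviations principle with given speed and
rate function. -/
def HasLDP (P : ℕ → Measure ℝ) (speed : ℕ → ℝ) (I : ℝ → ℝ≥0∞) : Prop :=
  LowerSemicontinuous I ∧ (∀ c : ℝ, IsCompact {x : ℝ | I x ≤ ENNReal.ofReal c}) ∧
    ∀ C : Set ℝ, MeasurableSet C →
      -(⨅ x ∈ interior C, (I x : EReal)) ≤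
          liminf (fun n => ((((speed n)⁻¹ : ℝ) : EReal)) * elog (P n C)) atTop ∧
        limsup (fun n => ((((speed n)⁻¹ : ℝ) : EReal)) * elog (P n C)) atTop ≤
          -(⨅ x ∈ closure C, (I x : EReal))

/-- The function `G` of the random field Curie-Weiss model. -/
def G (β : ℝ) (ν : Measure ℝ) (x : ℝ) : ℝ :=
  β / 2 * x ^ 2 - ∫ h, Real.log (Real.cosh (β * (x + h))) ∂ν

/-- The finite-volume function `G_n^h`. -/
def Gn (β : ℝ) (h : ℕ → ℝ) (n : ℕ) (x : ℝ) : ℝ :=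
  β / 2 * x ^ 2 - (1 / n) * ∑ i : Fin n, Real.log (Real.cosh (β * (x + h i)))

/-- `m` is a (local or global) minimum of `G` of type `k` and strength `l`. -/
def IsMinOfType (β : ℝ) (ν : Measure ℝ) (m : ℝ) (k : ℕ) (l : ℝ) : Prop :=
  1 ≤ k ∧ 0 < l ∧ (∀ i : ℕ, 1 ≤ i → i ≤ 2 * k - 1 → iteratedDeriv i (G β ν) m = 0) ∧
    iteratedDeriv (2 * k) (G β ν) m = l

/-- The height of a minimum `m` of `G`. -/
def height (β : ℝ) (ν : Measure ℝ) (m : ℝ) : ℝ := G β ν m - ⨅ w, G β ν w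

/-- The broadness of a minimum `m` of `G`. -/
def broadness (β : ℝ) (ν : Measure ℝ) (m : ℝ) : ℝ :=
  sInf ((fun y => |y - m|) '' {y | G β ν y < G β ν m})

/-- The moderate deviations rate function. -/
def mdpRate (β l : ℝ) (k : ℕ) (x : ℝ) : ℝ≥0∞ :=
  if k = 1 then ENNReal.ofReal (x ^ 2 / (2 * (l⁻¹ - β⁻¹)))
  else ENNReal.ofReal (l * x ^ (2 * k) / (Nat.factorial (2 * k)))

/-- The polynomial `P_{2k}`. -/
def P2k (l : ℝ) (k : ℕ) (s : ℝ) : ℝ :=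
  l / (2 * (Nat.factorial (2 * k))) * s ^ (2 * k) - ∑ i ∈ Finset.Icc 1 (2 * k - 1), |s| ^ i

/-!
The two centerings differ by `2nm / n^α → ∞`, so eventually the window
`|(S_n + nm)/n^α| < 1` lies inside the event `|(S_n - nm)/n^α| > 1`. The MDP lower bound for
`(S_n + nm)/n^α` gives the window exponential rate `0` (the rate function vanishes at `0`),
hence the event has rate `0` too. An MDP for `(S_n - nm)/n^α` with rate `x²/(2σ²)` would
instead give it rate at most `-1/(2σ²) < 0`; here `σ² > 0` because `β(1 - m²) < 1` at the
positive fixed point `m = tanh(βm)`, which is `t sech² t < tanh t` for `t = βm > 0`.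
-/

lemma elog_mono {x y : ℝ≥0∞} (h : x ≤ y) : elog x ≤ elog y := by
  rcases eq_or_ne x 0 with hx0 | hx0
  · simp [elog, hx0]
  rcases eq_or_ne y ⊤ with hyt | hyt
  · simp [elog, hyt]
  have hxt : x ≠ ⊤ := ne_top_of_le_ne_top hyt h
  have hy0 : y ≠ 0 := ne_bot_of_le_ne_bot hx0 h
  rw [elog, elog, if_neg hx0, if_neg hxt, if_neg hy0, if_neg hyt]
  exact EReal.coe_le_coe_iff.2 <|
    Real.log_le_log (ENNReal.toReal_pos hx0 hxt) (ENNReal.toReal_mono hyt h)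

lemma elog_nonpos {x : ℝ≥0∞} (h : x ≤ 1) : elog x ≤ 0 := by
  simpa [elog] using elog_mono h

instance isProbabilityMeasure_gibbsMeasure (β : ℝ) (h : ℕ → ℝ) (n : ℕ) :
    IsProbabilityMeasure (gibbsMeasure β h n) := by
  constructor
  have hZ : 0 < ∑ σ : Fin n → Bool, gibbsWeight β h n σ :=
    Finset.sum_pos (fun σ _ => Real.exp_pos _) Finset.univ_nonempty
  simp only [gibbsMeasure, Measure.smul_apply, Measure.finsetSum_apply, measure_univ,
    smul_eq_mul, mul_one]
  rw [← ENNReal.ofReal_sum_of_nonneg (f := gibbsWeight β h n) fun σ _ => (Real.exp_pos _).le]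
  exact ENNReal.inv_mul_cancel (ENNReal.ofReal_pos.2 hZ).ne' ENNReal.ofReal_ne_top

lemma Real.mul_one_sub_tanh_sq_lt_tanh {t : ℝ} (ht : 0 < t) : t * (1 - tanh t ^ 2) < tanh t := by
  have hc : 0 < cosh t := cosh_pos t
  have hsech : 1 - tanh t ^ 2 = 1 / cosh t ^ 2 := by
    rw [tanh_eq_sinh_div_cosh, div_pow, cosh_sq]
    field_simp
    ring
  have hsinh : 2 * t < 2 * sinh t * cosh t := by
    rw [← sinh_two_mul]
    exact self_lt_sinh_iff.2 (by linarith)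
  rw [hsech, tanh_eq_sinh_div_cosh, mul_one_div, div_lt_div_iff₀ (by positivity) hc]
  nlinarith

lemma mul_one_sub_sq_lt_one_of_eq_tanh {β m : ℝ} (hβ : 0 < β) (hm : 0 < m)
    (hfix : m = tanh (β * m)) : β * (1 - m ^ 2) < 1 := by
  have h := Real.mul_one_sub_tanh_sq_lt_tanh (mul_pos hβ hm)
  rw [← hfix] at h
  nlinarith

lemma eventually_rpow_le_mul {α m : ℝ} (hα : α < 1) (hm : 0 < m) :
    ∀ᶠ n : ℕ in atTop, (n : ℝ) ^ α ≤ n * m := by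
  have hlim : Tendsto (fun n : ℕ => (n : ℝ) ^ (α - 1)) atTop (𝓝 0) := by
    have := tendsto_rpow_neg_atTop (y := 1 - α) (by linarith)
    rw [neg_sub] at this
    exact this.comp tendsto_natCast_atTop_atTop
  filter_upwards [hlim.eventually (ge_mem_nhds hm), eventually_gt_atTop 0] with n hsmall hn
  have hn : (0 : ℝ) < n := Nat.cast_pos.2 hn
  calc (n : ℝ) ^ α = n * (n : ℝ) ^ (α - 1) := by
        rw [Real.rpow_sub hn, Real.rpow_one, mul_div_cancel₀ _ hn.ne']
    _ ≤ n * m := by gcongr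

lemma one_lt_abs_sub_div_of_abs_add_div_lt_one {s c a : ℝ} (ha : 0 < a) (hac : a ≤ c)
    (h : |(s + c) / a| < 1) : 1 < |(s - c) / a| := by
  rw [abs_div, abs_of_pos ha, div_lt_one ha, abs_lt] at h
  rw [abs_div, abs_of_pos ha, one_lt_div ha, lt_abs]
  right
  linarith

lemma map_Ioo_le_map_one_lt_abs {X : Type*} [MeasurableSpace X] (μ : Measure X) {f : X → ℝ}
    (hf : Measurable f) {c a : ℝ} (ha : 0 < a) (hac : a ≤ c) :
    μ.map (fun x => (f x + c) / a) (Set.Ioo (-1) 1) ≤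
      μ.map (fun x => (f x - c) / a) {y | 1 < |y|} := by
  have hopen : MeasurableSet {y : ℝ | 1 < |y|} :=
    (isOpen_lt continuous_const continuous_abs).measurableSet
  rw [Measure.map_apply (by fun_prop) measurableSet_Ioo, Measure.map_apply (by fun_prop) hopen]
  exact measure_mono fun x hx => one_lt_abs_sub_div_of_abs_add_div_lt_one ha hac (abs_lt.2 hx)

def scaledLogProb (P : ℕ → Measure ℝ) (speed : ℕ → ℝ) (C : Set ℝ) (n : ℕ) : EReal :=
  (((speed n)⁻¹ : ℝ) : EReal) * elog (P n C)

section scaledLogProb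

variable {P Q : ℕ → Measure ℝ} {speed : ℕ → ℝ} {I : ℝ → ℝ≥0∞} {C D : Set ℝ}

lemma scaledLogProb_mono (hspeed : ∀ n, 0 ≤ speed n) {n : ℕ} (h : P n C ≤ Q n D) :
    scaledLogProb P speed C n ≤ scaledLogProb Q speed D n :=
  mul_le_mul_of_nonneg_left (elog_mono h) (EReal.coe_nonneg.2 (inv_nonneg.2 (hspeed n)))

lemma scaledLogProb_nonpos (hspeed : ∀ n, 0 ≤ speed n) (hP : ∀ n, P n C ≤ 1) (n : ℕ) :
    scaledLogProb P speed C n ≤ 0 :=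
  mul_nonpos_of_nonneg_of_nonpos (EReal.coe_nonneg.2 (inv_nonneg.2 (hspeed n)))
    (elog_nonpos (hP n))

lemma HasLDP.neg_le_liminf (H : HasLDP P speed I) (hC : MeasurableSet C) {x : ℝ}
    (hx : x ∈ interior C) : -(I x : EReal) ≤ liminf (scaledLogProb P speed C) atTop :=
  (EReal.neg_le_neg_iff.2 (biInf_le _ hx)).trans (H.2.2 C hC).1

lemma HasLDP.limsup_le_neg (H : HasLDP P speed I) (hC : MeasurableSet C) {c : ℝ≥0∞}
    (hc : ∀ x ∈ closure C, c ≤ I x) :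
    limsup (scaledLogProb P speed C) atTop ≤ -(c : EReal) :=
  (H.2.2 C hC).2.trans <| EReal.neg_le_neg_iff.2 <|
    le_iInf₂ fun x hx => EReal.coe_ennreal_le_coe_ennreal_iff.2 (hc x hx)

lemma HasLDP.limsup_scaledLogProb_eq_zero (H : HasLDP P speed I) (hC : MeasurableSet C)
    {x : ℝ} (hx : x ∈ interior C) (hIx : I x = 0) (hspeed : ∀ n, 0 ≤ speed n)
    (hQ : ∀ n, Q n D ≤ 1) (hle : ∀ᶠ n in atTop, P n C ≤ Q n D) :
    limsup (scaledLogProb Q speed D) atTop = 0 := by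
  refine le_antisymm (limsup_le_of_le (by isBoundedDefault)
    (Eventually.of_forall (scaledLogProb_nonpos hspeed hQ))) ?_
  calc (0 : EReal) = -(I x : EReal) := by simp [hIx]
    _ ≤ liminf (scaledLogProb P speed C) atTop := H.neg_le_liminf hC hx
    _ ≤ liminf (scaledLogProb Q speed D) atTop :=
        liminf_le_liminf (hle.mono fun n hn => scaledLogProb_mono hspeed hn)
    _ ≤ limsup (scaledLogProb Q speed D) atTop := liminf_le_limsup

end scaledLogProb

theorem low_temperature_counterexample_general
    (β : ℝ) (hβ : 1 < β) (m : ℝ) (hm : 0 < m) (hfix : m = Real.tanh (β * m))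
    (s2 : ℝ) (hs2 : s2 = (1 - m ^ 2) / (1 - β * (1 - m ^ 2)))
    (α : ℝ) (hα2 : α < 1)
    (H : HasLDP
      (fun n => (gibbsMeasure β (fun _ => 0) n).map (fun σ => (mag σ + n * m) / (n : ℝ) ^ α))
      (fun n => (n : ℝ) ^ (2 * α - 1))
      (fun x => ENNReal.ofReal (x ^ 2 / (2 * s2)))) :
    limsup (fun n : ℕ => ((((n : ℝ) ^ (2 * α - 1))⁻¹ : ℝ) : EReal) *
        elog (((gibbsMeasure β (fun _ => 0) n).map
          (fun σ => (mag σ - n * m) / (n : ℝ) ^ α)) {x : ℝ | 1 < |x|})) atTop = 0 ∧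
      ¬ HasLDP
        (fun n => (gibbsMeasure β (fun _ => 0) n).map
          (fun σ => (mag σ - n * m) / (n : ℝ) ^ α))
        (fun n => (n : ℝ) ^ (2 * α - 1))
        (fun x => ENNReal.ofReal (x ^ 2 / (2 * s2))) := by
  have hs2pos : 0 < s2 := by
    have hslope := mul_one_sub_sq_lt_one_of_eq_tanh (by linarith) hm hfix
    have hm1 : m < 1 := hfix ▸ tanh_lt_one _
    rw [hs2]
    exact div_pos (by nlinarith) (by linarith)
  have hspeed : ∀ n : ℕ, 0 ≤ (n : ℝ) ^ (2 * α - 1) := fun n => by positivity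
  have hS : MeasurableSet {x : ℝ | 1 < |x|} :=
    (isOpen_lt continuous_const continuous_abs).measurableSet
  have hzero := H.limsup_scaledLogProb_eq_zero (C := Set.Ioo (-1) 1) measurableSet_Ioo (x := 0)
    (by rw [interior_Ioo]; norm_num) (by simp) hspeed (fun n => prob_le_one) <| by
      filter_upwards [eventually_rpow_le_mul hα2 hm, eventually_gt_atTop 0] with n hn hn0
      exact map_Ioo_le_map_one_lt_abs _ (measurable_of_countable _) (by positivity) hn
  refine ⟨hzero, fun H' => ?_⟩
  have hrate : ∀ x ∈ closure {x : ℝ | 1 < |x|},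
      ENNReal.ofReal (1 / (2 * s2)) ≤ ENNReal.ofReal (x ^ 2 / (2 * s2)) := fun x hx => by
    have hx : 1 ≤ |x| := closure_lt_subset_le continuous_const continuous_abs hx
    gcongr
    nlinarith [sq_abs x]
  have hneg := H'.limsup_le_neg hS hrate
  rw [hzero, EReal.le_neg, neg_zero] at hneg
  exact (EReal.coe_ennreal_pos.2 (ENNReal.ofReal_pos.2 (by positivity))).not_ge hneg

/-- The low-temperature Curie-Weiss counterexample (Example 3.6 of the paper). -/
theorem low_temperature_counterexample
    (β : ℝ) (hβ : 1 < β) (m : ℝ) (hm : 0 < m) (hfix : m = Real.tanh (β * m))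
    (huniq : ∀ x : ℝ, 0 < x → x = Real.tanh (β * x) → x = m)
    (s2 : ℝ) (hs2 : s2 = (1 - m ^ 2) / (1 - β * (1 - m ^ 2)))
    (α : ℝ) (hα1 : 1 / 2 < α) (hα2 : α < 1)
    (H : HasLDP
      (fun n => (gibbsMeasure β (fun _ => 0) n).map (fun σ => (mag σ + n * m) / (n : ℝ) ^ α))
      (fun n => (n : ℝ) ^ (2 * α - 1))
      (fun x => ENNReal.ofReal (x ^ 2 / (2 * s2)))) :
    limsup (fun n : ℕ => ((((n : ℝ) ^ (2 * α - 1))⁻¹ : ℝ) : EReal) *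
        elog (((gibbsMeasure β (fun _ => 0) n).map
          (fun σ => (mag σ - n * m) / (n : ℝ) ^ α)) {x : ℝ | 1 < |x|})) atTop = 0 ∧
      ¬ HasLDP
        (fun n => (gibbsMeasure β (fun _ => 0) n).map
          (fun σ => (mag σ - n * m) / (n : ℝ) ^ α))
        (fun n => (n : ℝ) ^ (2 * α - 1))
        (fun x => ENNReal.ofReal (x ^ 2 / (2 * s2))) :=
  low_temperature_counterexample_general β hβ m hm hfix s2 hs2 α hα2 H
end
end

section
/- Suppose ν has a finite absolute first moment. Then for μ-almost every realization h and every j ∈ ℕ₀, the j-th derivatives G_n^{h,(j)} converge to G^{(j)} as n → ∞, uniformly on compact subsets of ℝ. -/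
open MeasureTheory ProbabilityTheory Real Filter Topology
open scoped ENNReal NNReal

noncomputable section

/-!
For every `j`, the function `f_j := (d/dx)^j log cosh (β x)` is Lipschitz: its derivative is
`β^(j+1) P_j(tanh (β x))` for a polynomial `P_j`, hence bounded. So the empirical means
`n⁻¹ ∑_{i<n} f_j (x + h_i)` form an equi-Lipschitz family in `x`. The strong law of large numbers
makes them converge to `∫ f_j (x + y) dν(y)` almost surely, simultaneously for all `j` and all
rational `x`, and equicontinuity upgrades this to uniform convergence on compact sets. Since the
`f_j` have bounded derivatives, one may differentiate under the integral sign, so these limits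
are the derivatives of the integral part of `G`; the quadratic part is common to `G` and `G_n^h`.
-/

open Finset
open scoped ContDiff

theorem iteratedDeriv_eq_of_hasDerivAt_succ {F : ℕ → ℝ → ℝ}
    (hF : ∀ j x, HasDerivAt (F j) (F (j + 1) x) x) (j : ℕ) : iteratedDeriv j (F 0) = F j := by
  induction j with
  | zero => exact iteratedDeriv_zero
  | succ j ih => rw [iteratedDeriv_succ, ih]; exact funext fun x => (hF j x).deriv

theorem ContDiff.hasDerivAt_iteratedDeriv {f : ℝ → ℝ} (hf : ContDiff ℝ ∞ f) (j : ℕ) (x : ℝ) :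
    HasDerivAt (iteratedDeriv j f) (iteratedDeriv (j + 1) f x) x := by
  rw [iteratedDeriv_succ]
  exact (hf.differentiable_iteratedDeriv j (mod_cast ENat.natCast_lt_top j)).differentiableAt
    |>.hasDerivAt

theorem iteratedDeriv_sub_eq_of_hasDerivAt_succ {f : ℝ → ℝ} (hf : ContDiff ℝ ∞ f)
    {F : ℕ → ℝ → ℝ} (hF : ∀ j x, HasDerivAt (F j) (F (j + 1) x) x) (j : ℕ) :
    iteratedDeriv j (fun x => f x - F 0 x) = fun x => iteratedDeriv j f x - F j x := by
  simpa using iteratedDeriv_eq_of_hasDerivAt_succ (F := fun j x => iteratedDeriv j f x - F j x)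
    (fun j x => (hf.hasDerivAt_iteratedDeriv j x).sub (hF j x)) j

theorem tendstoUniformlyOn_of_equicontinuous_of_dense {ι X α : Type*} [TopologicalSpace X]
    [UniformSpace α] {l : Filter ι} {F : ι → X → α} {f : X → α} (hF : Equicontinuous F)
    (hf : Continuous f) {s : Set X} (hs : Dense s)
    (hFs : ∀ x ∈ s, Tendsto (F · x) l (𝓝 (f x))) {K : Set X} (hK : IsCompact K) :
    TendstoUniformlyOn F f l K := by
  have hpointwise : ∀ x, Tendsto (F · x) l (𝓝 (f x)) := fun x =>
    (hF.isClosed_setOfPred_tendsto hf).closure_subset_iff.2 hFs (hs x)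
  have hcover : ⋃₀ {K : Set X | IsCompact K} = Set.univ :=
    Set.eq_univ_of_forall fun x => Set.mem_sUnion.2 ⟨{x}, isCompact_singleton, rfl⟩
  have := (EquicontinuousOn.tendsto_uniformOnFun_iff_pi (fun _ hK => hK) hcover
    (fun K _ => hF.equicontinuousOn K) l f).2 (tendsto_pi_nhds.2 hpointwise)
  exact UniformOnFun.tendsto_iff_tendstoUniformlyOn.1 this K hK

def empiricalMean (f : ℝ → ℝ) (h : ℕ → ℝ) (n : ℕ) (x : ℝ) : ℝ :=
  (n : ℝ)⁻¹ * ∑ i ∈ range n, f (x + h i)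

theorem hasDerivAt_empiricalMean {f f' : ℝ → ℝ} (hf : ∀ x, HasDerivAt f (f' x) x)
    (h : ℕ → ℝ) (n : ℕ) (x : ℝ) :
    HasDerivAt (empiricalMean f h n) (empiricalMean f' h n x) x :=
  (HasDerivAt.fun_sum fun i _ => (hf (x + h i)).comp_add_const x (h i)).const_mul _

theorem LipschitzWith.empiricalMean {K : ℝ≥0} {f : ℝ → ℝ} (hf : LipschitzWith K f)
    (h : ℕ → ℝ) (n : ℕ) : LipschitzWith K (empiricalMean f h n) := by
  refine LipschitzWith.of_dist_le_mul fun x y => ?_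
  rcases n.eq_zero_or_pos with rfl | hn
  · simp only [_root_.empiricalMean, CharP.cast_eq_zero, inv_zero, zero_mul, dist_self]
    positivity
  have hsum : dist (∑ i ∈ range n, f (x + h i)) (∑ i ∈ range n, f (y + h i))
      ≤ n * (K * dist x y) := by
    calc _ ≤ ∑ i ∈ range n, dist (f (x + h i)) (f (y + h i)) := dist_sum_sum_le _ _ _
      _ ≤ ∑ _i ∈ range n, K * dist x y := sum_le_sum fun i _ => by
          simpa using hf.dist_le_mul (x + h i) (y + h i)
      _ = n * (K * dist x y) := by simp
  rw [_root_.empiricalMean, _root_.empiricalMean, dist_eq_norm, ← mul_sub, norm_mul,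
    norm_inv, Real.norm_natCast, ← dist_eq_norm, inv_mul_le_iff₀ (by exact_mod_cast hn)]
  exact hsum

theorem LipschitzWith.integrable_comp_add {K : ℝ≥0} {f : ℝ → ℝ} (hf : LipschitzWith K f)
    {ν : Measure ℝ} [IsFiniteMeasure ν] (hmom : Integrable (fun y => |y|) ν) (x : ℝ) :
    Integrable (fun y => f (x + y)) ν := by
  refine ((integrable_const (|f 0| + K * |x|)).add (hmom.const_mul K)).mono'
    (hf.continuous.comp (continuous_const.add continuous_id)).aestronglyMeasurable
    (ae_of_all _ fun y => ?_)
  have hlip : |f (x + y) - f 0| ≤ K * |x + y| := by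
    simpa [Real.dist_eq] using hf.dist_le_mul (x + y) 0
  have htri := abs_add_le x y
  have hrev := abs_sub_abs_le_abs_sub (f (x + y)) (f 0)
  change |f (x + y)| ≤ |f 0| + K * |x| + K * |y|
  nlinarith [K.coe_nonneg]

theorem hasDerivAt_integral_comp_add {K : ℝ≥0} {f f' : ℝ → ℝ} (hf : LipschitzWith K f)
    (hf' : Continuous f') (hderiv : ∀ x, HasDerivAt f (f' x) x) {ν : Measure ℝ}
    [IsFiniteMeasure ν] (hmom : Integrable (fun y => |y|) ν) (x : ℝ) :
    HasDerivAt (fun x => ∫ y, f (x + y) ∂ν) (∫ y, f' (x + y) ∂ν) x := by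
  refine (hasDerivAt_integral_of_dominated_loc_of_lip (bound := fun _ => K) univ_mem
    (Eventually.of_forall fun x => (hf.integrable_comp_add hmom x).aestronglyMeasurable)
    (hf.integrable_comp_add hmom x)
    (hf'.comp (continuous_const.add continuous_id)).aestronglyMeasurable
    (ae_of_all _ fun y => ?_) (integrable_const _)
    (ae_of_all _ fun y => (hderiv (x + y)).comp_add_const x y)).2
  simpa using (LipschitzWith.of_dist_le_mul fun a b => by
    simpa using hf.dist_le_mul (a + y) (b + y)).lipschitzOnWith (s := Set.univ)

theorem IsProductMeasure.eq_infinitePi {ν : Measure ℝ} [IsProbabilityMeasure ν]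
    {μ : Measure (ℕ → ℝ)} (hμ : IsProductMeasure ν μ) :
    μ = Measure.infinitePi fun _ : ℕ => ν := by
  classical
  refine Measure.eq_infinitePi _ fun s t ht => ?_
  obtain ⟨n, hsn⟩ := s.exists_nat_subset_range
  have hbox : Set.pi s t = (fun h (i : Fin n) => h (i : ℕ)) ⁻¹'
      Set.univ.pi fun i : Fin n => if (i : ℕ) ∈ s then t i else Set.univ := by
    ext h
    simp only [Set.mem_pi, Finset.mem_coe, Set.mem_preimage, Set.mem_univ, true_implies]
    refine ⟨fun hh i => ?_, fun hh i hi => ?_⟩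
    · split_ifs with hi
      exacts [hh i hi, Set.mem_univ _]
    · simpa [hi] using hh ⟨i, Finset.mem_range.1 (hsn hi)⟩
  rw [hbox, ← Measure.map_apply (by fun_prop)
    (.univ_pi fun i => by split_ifs; exacts [ht i, .univ]), hμ n, Measure.pi_pi]
  simp only [apply_ite ν, measure_univ]
  rw [Fin.prod_univ_eq_prod_range (fun i => if i ∈ s then ν (t i) else 1), prod_ite_mem,
    Finset.inter_eq_right.2 hsn]

theorem ae_tendsto_empiricalMean {ν : Measure ℝ} [IsProbabilityMeasure ν] {f : ℝ → ℝ}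
    (hf : Measurable f) {x : ℝ} (hint : Integrable (fun y => f (x + y)) ν) :
    ∀ᵐ h ∂(Measure.infinitePi fun _ : ℕ => ν),
      Tendsto (fun n => empiricalMean f h n x) atTop (𝓝 (∫ y, f (x + y) ∂ν)) := by
  set P := Measure.infinitePi fun _ : ℕ => ν
  set g : ℝ → ℝ := fun y => f (x + y)
  have hg : Measurable g := hf.comp (measurable_const_add x)
  have heval (i : ℕ) : MeasurePreserving (Function.eval i) P ν :=
    measurePreserving_eval_infinitePi _ i
  have hident (i : ℕ) : IdentDistrib (fun h : ℕ → ℝ => g (h i)) (fun h => g (h 0)) P P :=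
    (show IdentDistrib (Function.eval i) (Function.eval 0) P P from ⟨(heval i).aemeasurable,
      (heval 0).aemeasurable, by rw [(heval i).map_eq, (heval 0).map_eq]⟩).comp hg
  have hlaw := strong_law_ae (fun i (h : ℕ → ℝ) => g (h i))
    (((heval 0).integrable_comp hg.aestronglyMeasurable).2 hint)
    (fun i j hij => (iIndepFun_infinitePi fun _ => hg).indepFun hij) hident
  rwa [← (heval 0).map_eq, integral_map (heval 0).aemeasurable hg.aestronglyMeasurable]

theorem Real.hasDerivAt_tanh (x : ℝ) : HasDerivAt tanh (1 - tanh x ^ 2) x := by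
  have hdiv := (hasDerivAt_sinh x).div (hasDerivAt_cosh x) (cosh_pos x).ne'
  rw [show sinh / cosh = tanh from funext fun y => (tanh_eq_sinh_div_cosh y).symm] at hdiv
  refine hdiv.congr_deriv ?_
  rw [tanh_eq_sinh_div_cosh]
  field_simp

open Polynomial in
/-- `tanhPoly j` expresses the `j`-th derivative of `tanh` as a polynomial in `tanh`. -/
def tanhPoly : ℕ → ℝ[X]
  | 0 => X
  | j + 1 => (1 - X ^ 2) * derivative (tanhPoly j)

def logCoshDeriv (β : ℝ) : ℕ → ℝ → ℝ
  | 0 => fun x => log (cosh (β * x))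
  | j + 1 => fun x => β ^ (j + 1) * (tanhPoly j).eval (tanh (β * x))

theorem hasDerivAt_logCoshDeriv (β : ℝ) (j : ℕ) (x : ℝ) :
    HasDerivAt (logCoshDeriv β j) (logCoshDeriv β (j + 1) x) x := by
  have hlin : HasDerivAt (fun y => β * y) β x := by simpa using (hasDerivAt_id x).const_mul β
  cases j with
  | zero =>
    refine (((hasDerivAt_cosh (β * x)).comp x hlin).log (cosh_pos _).ne').congr_deriv ?_
    simp only [logCoshDeriv, tanhPoly, Polynomial.eval_X, Function.comp_apply,
      tanh_eq_sinh_div_cosh]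
    ring
  | succ j =>
    refine ((((tanhPoly j).hasDerivAt _).comp x ((hasDerivAt_tanh (β * x)).comp x hlin)).const_mul
      (β ^ (j + 1))).congr_deriv ?_
    simp only [logCoshDeriv, tanhPoly, Polynomial.eval_mul, Polynomial.eval_sub,
      Polynomial.eval_one, Polynomial.eval_pow, Polynomial.eval_X, Function.comp_apply]
    ring

theorem exists_lipschitzWith_logCoshDeriv (β : ℝ) (j : ℕ) :
    ∃ K, LipschitzWith K (logCoshDeriv β j) := by
  obtain ⟨C, hC⟩ := isCompact_Icc.exists_bound_of_continuousOn
    (f := fun t => β ^ (j + 1) * (tanhPoly j).eval t) (by fun_prop : Continuous _).continuousOn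
  refine ⟨C.toNNReal, lipschitzWith_of_nnnorm_deriv_le
    (fun x => (hasDerivAt_logCoshDeriv β j x).differentiableAt) fun x => ?_⟩
  rw [(hasDerivAt_logCoshDeriv β j x).deriv, ← NNReal.coe_le_coe, coe_nnnorm,
    Real.coe_toNNReal']
  exact (hC _ (abs_le.1 (abs_tanh_lt_one (β * x)).le)).trans (le_max_left _ _)

theorem Gn_eq_sub_empiricalMean (β : ℝ) (h : ℕ → ℝ) (n : ℕ) :
    Gn β h n = fun x => β / 2 * x ^ 2 - empiricalMean (logCoshDeriv β 0) h n x := by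
  ext x
  rw [Gn, empiricalMean, one_div,
    Fin.sum_univ_eq_sum_range (fun i => log (cosh (β * (x + h i))))]
  rfl

theorem derivatives_uniform_convergence_general
    (β : ℝ) (ν : Measure ℝ) [IsProbabilityMeasure ν]
    (hmom : Integrable (fun x : ℝ => |x|) ν)
    (μ : Measure (ℕ → ℝ)) (hμ : IsProductMeasure ν μ) :
    ∀ᵐ h ∂μ, ∀ j : ℕ, ∀ K : Set ℝ, IsCompact K →
      TendstoUniformlyOn (fun n => iteratedDeriv j (Gn β h n))
        (iteratedDeriv j (G β ν)) atTop K := by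
  rw [hμ.eq_infinitePi]
  set F := logCoshDeriv β
  have hF := hasDerivAt_logCoshDeriv β
  choose L hL using exists_lipschitzWith_logCoshDeriv β
  have hmean (j : ℕ) (x : ℝ) : HasDerivAt (fun x => ∫ y, F j (x + y) ∂ν)
      (∫ y, F (j + 1) (x + y) ∂ν) x :=
    hasDerivAt_integral_comp_add (hL j) (hL (j + 1)).continuous (hF j) hmom x
  have hslln : ∀ᵐ h ∂(Measure.infinitePi fun _ : ℕ => ν), ∀ j, ∀ r : ℚ,
      Tendsto (fun n => empiricalMean (F j) h n r) atTop (𝓝 (∫ y, F j (r + y) ∂ν)) := by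
    simp only [ae_all_iff]
    exact fun j r => ae_tendsto_empiricalMean (hL j).continuous.measurable
      ((hL j).integrable_comp_add hmom r)
  filter_upwards [hslln] with h hh j K hK
  have hq : ContDiff ℝ ∞ fun x : ℝ => β / 2 * x ^ 2 := by fun_prop
  simp only [Gn_eq_sub_empiricalMean, iteratedDeriv_sub_eq_of_hasDerivAt_succ hq
    (fun j => hasDerivAt_empiricalMean (hF j) h _)]
  rw [show G β ν = fun x => β / 2 * x ^ 2 - ∫ y, F 0 (x + y) ∂ν from rfl,
    iteratedDeriv_sub_eq_of_hasDerivAt_succ hq hmean]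
  have hconst : TendstoUniformlyOn (fun _ : ℕ => iteratedDeriv j fun x : ℝ => β / 2 * x ^ 2)
      (iteratedDeriv j fun x : ℝ => β / 2 * x ^ 2) atTop K :=
    fun u hu => .of_forall fun _ _ _ => refl_mem_uniformity hu
  exact hconst.sub (tendstoUniformlyOn_of_equicontinuous_of_dense
    (LipschitzWith.uniformEquicontinuous _ (L j) fun n => (hL j).empiricalMean h n).equicontinuous
    (continuous_iff_continuousAt.2 fun x => (hmean j x).continuousAt) Rat.denseRange_cast
    (Set.forall_mem_range.2 (hh j)) hK)

/-- Uniform convergence of the derivatives of `G_n^h` to those of `G`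
(Lemma 5.3 (i) of the paper). -/
theorem derivatives_uniform_convergence
    (β : ℝ) (hβ : 0 < β) (ν : Measure ℝ) [IsProbabilityMeasure ν]
    (hmom : Integrable (fun x : ℝ => |x|) ν)
    (μ : Measure (ℕ → ℝ)) [IsProbabilityMeasure μ] (hμ : IsProductMeasure ν μ) :
    ∀ᵐ h ∂μ, ∀ j : ℕ, ∀ K : Set ℝ, IsCompact K →
      TendstoUniformlyOn (fun n => iteratedDeriv j (Gn β h n))
        (iteratedDeriv j (G β ν)) atTop K :=
  derivatives_uniform_convergence_general β ν hmom μ hμ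
end
end

section
/- Suppose ν has a finite absolute first moment. Then for μ-almost every realization h the following holds: for every global minimum m of G and every closed (possibly unbounded) subset V ⊆ ℝ containing no global minimum of G, there exists ε > 0 such that ∫_V exp(−n(G_n^h(s) − G(m))) ds ≤ exp(−n ε) for all sufficiently large n. -/
/-!
Write `G β ρ x = β / 2 * x ^ 2 - F β ρ x` for an arbitrary measure `ρ`; then `Gn β h n` is `G` for
the empirical measure of `h 0, …, h (n - 1)`. Since `log ∘ cosh` is 1-Lipschitz, every `F β ρ`
is `|β|`-Lipschitz. The strong law of large numbers, used at the countably many rational points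
and for `|·|`, gives almost surely `F β ρₙ → F β ν` on `ℚ` together with convergence of the first
absolute moments; equicontinuity turns the former into uniform convergence on compact sets.
As `G β ν` is continuous and coercive, `G β ν ≥ G β ν m + a` on `V` for some `a > 0`, so
`Gn ≥ G β ν m + a / 2` on `V ∩ [-R, R]` for large `n`, while `log (cosh y) ≤ |y|` gives
`Gn s - G β ν m ≥ 1 + β s² / 8` for `|s| ≥ R`. The integrand is thus at most `e^{-nc}` times a
fixed Gaussian.
-/

open MeasureTheory ProbabilityTheory Real Filter Topology
open scoped ENNReal NNReal

noncomputable section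

namespace Real

lemma hasDerivAt_log_cosh (x : ℝ) : HasDerivAt (fun y => log (cosh y)) (tanh x) x := by
  simpa [tanh_eq_sinh_div_cosh] using (hasDerivAt_cosh x).log (cosh_pos x).ne'

lemma lipschitzWith_log_cosh : LipschitzWith 1 (fun x => log (cosh x)) := by
  refine lipschitzWith_of_nnnorm_deriv_le (fun x => (hasDerivAt_log_cosh x).differentiableAt)
    fun x => ?_
  rw [(hasDerivAt_log_cosh x).deriv, ← NNReal.coe_le_coe, coe_nnnorm, norm_eq_abs]
  exact (abs_lt.2 (tanh_bijOn.mapsTo (Set.mem_univ x))).le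

lemma abs_log_cosh_le_abs (x : ℝ) : |log (cosh x)| ≤ |x| := by
  simpa using lipschitzWith_log_cosh.dist_le_mul x 0

end Real

section General

variable {ι X α : Type*} [TopologicalSpace X] [UniformSpace α] {l : Filter ι}
  {F : ι → X → α} {f : X → α}

lemma Equicontinuous.tendsto_of_forall_mem_dense (hF : Equicontinuous F) (hf : Continuous f)
    {s : Set X} (hs : Dense s) (h : ∀ x ∈ s, Tendsto (F · x) l (𝓝 (f x))) (x : X) :
    Tendsto (F · x) l (𝓝 (f x)) :=
  (hF.isClosed_setOfPred_tendsto hf).closure_subset_iff.2 h (hs x)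

lemma Equicontinuous.tendstoUniformlyOn_of_tendsto (hF : Equicontinuous F) {K : Set X}
    (hK : IsCompact K) (h : ∀ x, Tendsto (F · x) l (𝓝 (f x))) :
    TendstoUniformlyOn F f l K := by
  have := (EquicontinuousOn.tendsto_uniformOnFun_iff_pi' (𝔖 := {K}) (by simpa using hK)
    (by simpa using hF.equicontinuousOn K) l f).2 (tendsto_pi_nhds.2 fun x => h x)
  exact UniformOnFun.tendsto_iff_tendstoUniformlyOn.1 this K rfl

lemma Continuous.exists_forall_add_le_of_isClosed {X : Type*} [TopologicalSpace X] {f : X → ℝ}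
    (hf : Continuous f) (hfc : Tendsto f (cocompact X) atTop) {V : Set X} (hV : IsClosed V)
    (hVmin : ∀ y ∈ V, ∃ w, f w < f y) {m : X} (hm : ∀ w, f m ≤ f w) :
    ∃ a > 0, ∀ y ∈ V, f m + a ≤ f y := by
  rcases V.eq_empty_or_nonempty with rfl | ⟨v, hv⟩
  · exact ⟨1, one_pos, by simp⟩
  obtain ⟨y₀, hy₀, hmin⟩ := hf.continuousOn.exists_isMinOn' hV hv
    (tendsto_inf_left hfc |>.eventually_ge_atTop (f v))
  obtain ⟨w, hw⟩ := hVmin y₀ hy₀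
  exact ⟨f y₀ - f m, by linarith [hm w], fun y hy => by linarith [isMinOn_iff.1 hmin y hy]⟩

lemma exists_forall_le_mul_sq {k : ℝ} (hk : 0 < k) (C : ℝ) :
    ∃ R, ∀ s : ℝ, R ≤ |s| → C ≤ k * s ^ 2 := by
  refine ⟨√(|C| / k), fun s hs => ?_⟩
  have h := pow_le_pow_left₀ (Real.sqrt_nonneg _) hs 2
  rw [Real.sq_sqrt (by positivity), sq_abs, div_le_iff₀ hk] at h
  linarith [le_abs_self C]

lemma exists_eventually_integral_exp_neg_mul_le {Ω : Type*} [MeasurableSpace Ω]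
    {μ : Measure Ω} {φ : ℕ → Ω → ℝ} {g : Ω → ℝ} {c : ℝ} (hc : 0 < c)
    (hg : Integrable (fun s => exp (-g s)) μ)
    (hφ : ∀ᶠ n : ℕ in atTop, ∀ᵐ s ∂μ, n * c + g s ≤ n * φ n s) :
    ∃ ε > 0, ∀ᶠ n : ℕ in atTop, ∫ s, exp (-n * φ n s) ∂μ ≤ exp (-n * ε) := by
  refine ⟨c / 2, half_pos hc, ?_⟩
  have hI : ∀ᶠ n : ℕ in atTop, ∫ s, exp (-g s) ∂μ ≤ exp (n * (c / 2)) :=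
    (tendsto_exp_atTop.comp (tendsto_natCast_atTop_atTop.atTop_mul_const (half_pos hc))
      ).eventually_ge_atTop _
  filter_upwards [hφ, hI] with n hn hIn
  calc ∫ s, exp (-n * φ n s) ∂μ ≤ ∫ s, exp (-(n * c)) * exp (-g s) ∂μ := by
        refine integral_mono_of_nonneg (.of_forall fun s => (exp_pos _).le) (hg.const_mul _) ?_
        filter_upwards [hn] with s hs
        rw [← exp_add]
        exact exp_le_exp.2 (by linarith)
    _ = exp (-(n * c)) * ∫ s, exp (-g s) ∂μ := integral_const_mul _ _
    _ ≤ exp (-(n * c)) * exp (n * (c / 2)) := by gcongr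
    _ = exp (-n * (c / 2)) := by rw [← exp_add]; ring_nf

end General

namespace RandomFieldCurieWeiss

def F (β : ℝ) (ρ : Measure ℝ) (x : ℝ) : ℝ := ∫ t, log (cosh (β * (x + t))) ∂ρ

lemma G_eq_sub_F (β : ℝ) (ρ : Measure ℝ) (x : ℝ) : G β ρ x = β / 2 * x ^ 2 - F β ρ x := rfl

def empiricalMeasure (h : ℕ → ℝ) (n : ℕ) : Measure ℝ :=
  ∑ i : Fin n, (n : ℝ≥0∞)⁻¹ • Measure.dirac (h i)

lemma integrable_inv_smul_dirac {n : ℕ} (i : Fin n) (x : ℝ) (f : ℝ → ℝ) :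
    Integrable f ((n : ℝ≥0∞)⁻¹ • Measure.dirac x) :=
  (integrable_dirac enorm_lt_top).smul_measure
    (ENNReal.inv_ne_top.2 (Nat.cast_ne_zero.2 (Fin.pos i).ne'))

lemma integrable_empiricalMeasure (h : ℕ → ℝ) (n : ℕ) (f : ℝ → ℝ) :
    Integrable f (empiricalMeasure h n) :=
  integrable_finsetSum_measure.2 fun i _ => integrable_inv_smul_dirac i _ f

lemma integral_empiricalMeasure (h : ℕ → ℝ) (n : ℕ) (f : ℝ → ℝ) :
    ∫ t, f t ∂(empiricalMeasure h n) = (1 / n) * ∑ i : Fin n, f (h i) := by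
  rw [empiricalMeasure,
    integral_finsetSum_measure fun i _ => integrable_inv_smul_dirac i _ f]
  simp [integral_smul_measure, Finset.mul_sum]

lemma Gn_eq_G_empiricalMeasure (β : ℝ) (h : ℕ → ℝ) (n : ℕ) :
    Gn β h n = G β (empiricalMeasure h n) := by
  ext x
  rw [Gn, G, integral_empiricalMeasure]

instance (h : ℕ → ℝ) (n : ℕ) : IsZeroOrProbabilityMeasure (empiricalMeasure h n) := by
  rw [isZeroOrProbabilityMeasure_iff]
  rcases n.eq_zero_or_pos with rfl | hn
  · simp [empiricalMeasure]
  · right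
    simp [empiricalMeasure, ENNReal.mul_inv_cancel (Nat.cast_ne_zero.2 hn.ne')]

section Estimates

variable {ρ : Measure ℝ}

lemma abs_log_cosh_mul_add_le (β x t : ℝ) :
    |log (cosh (β * (x + t)))| ≤ |β| * |x| + |β| * |t| := by
  calc |log (cosh (β * (x + t)))| ≤ |β * (x + t)| := Real.abs_log_cosh_le_abs _
    _ ≤ |β| * |x| + |β| * |t| := by rw [abs_mul, ← mul_add]; gcongr; exact abs_add_le x t

lemma integrable_log_cosh_mul_add [IsFiniteMeasure ρ] (hρ : Integrable (fun t => |t|) ρ)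
    (β x : ℝ) : Integrable (fun t => log (cosh (β * (x + t)))) ρ :=
  ((integrable_const _).add (hρ.const_mul |β|)).mono'
    (Real.lipschitzWith_log_cosh.continuous.comp (by fun_prop)).aestronglyMeasurable
    (.of_forall fun t => abs_log_cosh_mul_add_le β x t)

lemma lipschitzWith_F [IsZeroOrProbabilityMeasure ρ] (hρ : Integrable (fun t => |t|) ρ)
    (β : ℝ) : LipschitzWith ‖β‖₊ (F β ρ) := by
  refine .of_dist_le_mul fun x y => ?_
  have hpt : ∀ t, ‖log (cosh (β * (x + t))) - log (cosh (β * (y + t)))‖ ≤ |β| * dist x y := by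
    intro t
    rw [← dist_eq_norm]
    calc _ ≤ dist (β * (x + t)) (β * (y + t)) := by
          simpa using Real.lipschitzWith_log_cosh.dist_le_mul (β * (x + t)) (β * (y + t))
      _ = |β| * dist x y := by simp only [Real.dist_eq]; rw [← abs_mul]; ring_nf
  calc dist (F β ρ x) (F β ρ y)
      = ‖∫ t, (log (cosh (β * (x + t))) - log (cosh (β * (y + t)))) ∂ρ‖ := by
        rw [dist_eq_norm, F, F, integral_sub (integrable_log_cosh_mul_add hρ β x)
          (integrable_log_cosh_mul_add hρ β y)]
    _ ≤ |β| * dist x y * ρ.real Set.univ := norm_integral_le_of_norm_le_const (.of_forall hpt)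
    _ ≤ ‖β‖₊ * dist x y := by
        simpa using mul_le_of_le_one_right (by positivity) measureReal_le_one

lemma F_le [IsZeroOrProbabilityMeasure ρ] (hρ : Integrable (fun t => |t|) ρ) (β x : ℝ) :
    F β ρ x ≤ |β| * (|x| + ∫ t, |t| ∂ρ) := by
  calc F β ρ x ≤ ∫ t, (|β| * |x| + |β| * |t|) ∂ρ :=
        integral_mono (integrable_log_cosh_mul_add hρ β x)
          ((integrable_const _).add (hρ.const_mul |β|))
          fun t => (le_abs_self _).trans (abs_log_cosh_mul_add_le β x t)
    _ = ρ.real Set.univ * (|β| * |x|) + |β| * ∫ t, |t| ∂ρ := by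
        rw [integral_add (integrable_const _) (hρ.const_mul |β|), integral_const,
          integral_const_mul, smul_eq_mul]
    _ ≤ |β| * (|x| + ∫ t, |t| ∂ρ) := by
        have := mul_le_of_le_one_left (by positivity : 0 ≤ |β| * |x|)
          (measureReal_le_one (μ := ρ) (s := Set.univ))
        linarith

lemma quadratic_le_G [IsZeroOrProbabilityMeasure ρ] (hρ : Integrable (fun t => |t|) ρ)
    {β : ℝ} (hβ : 0 ≤ β) (x : ℝ) :
    β / 4 * x ^ 2 - β * (1 + ∫ t, |t| ∂ρ) ≤ G β ρ x := by
  have hF := F_le hρ β x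
  rw [abs_of_nonneg hβ] at hF
  rw [G_eq_sub_F]
  nlinarith [mul_nonneg hβ (sq_nonneg (|x| - 2)), sq_abs x]

end Estimates

section Convergence

variable {β : ℝ} {ν : Measure ℝ} [IsZeroOrProbabilityMeasure ν]

lemma continuous_G (hν : Integrable (fun t => |t|) ν) (β : ℝ) : Continuous (G β ν) :=
  (continuous_const.mul (continuous_pow 2)).sub (lipschitzWith_F hν β).continuous

lemma tendsto_G_cocompact (hβ : 0 < β) (hν : Integrable (fun t => |t|) ν) :
    Tendsto (G β ν) (cocompact ℝ) atTop := by
  refine tendsto_atTop_mono (quadratic_le_G hν hβ.le) ?_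
  refine tendsto_atTop_add_const_right _ _ (Tendsto.const_mul_atTop (by positivity) ?_)
  simpa only [Function.comp_def, Real.norm_eq_abs, sq_abs] using
    (tendsto_pow_atTop two_ne_zero).comp (tendsto_norm_cocompact_atTop (E := ℝ))

variable {ρ : ℕ → Measure ℝ} [∀ n, IsZeroOrProbabilityMeasure (ρ n)]

lemma tendstoUniformlyOn_F
    (hν : Integrable (fun t => |t|) ν) (hρ : ∀ n, Integrable (fun t => |t|) (ρ n))
    (hF : ∀ q : ℚ, Tendsto (fun n => F β (ρ n) q) atTop (𝓝 (F β ν q)))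
    {K : Set ℝ} (hK : IsCompact K) :
    TendstoUniformlyOn (fun n => F β (ρ n)) (F β ν) atTop K := by
  have hequi : Equicontinuous fun n => F β (ρ n) :=
    (LipschitzWith.uniformEquicontinuous _ _ fun n => lipschitzWith_F (hρ n) β).equicontinuous
  refine hequi.tendstoUniformlyOn_of_tendsto hK
    (hequi.tendsto_of_forall_mem_dense (lipschitzWith_F hν β).continuous Rat.denseRange_cast ?_)
  rintro _ ⟨q, rfl⟩
  exact hF q

lemma exists_eventually_mul_add_le_mul_G_sub (hβ : 0 < β)
    (hν : Integrable (fun t => |t|) ν) (hρ : ∀ n, Integrable (fun t => |t|) (ρ n))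
    (hF : ∀ q : ℚ, Tendsto (fun n => F β (ρ n) q) atTop (𝓝 (F β ν q)))
    (hA : Tendsto (fun n => ∫ t, |t| ∂ρ n) atTop (𝓝 (∫ t, |t| ∂ν)))
    {m : ℝ} (hm : ∀ w, G β ν m ≤ G β ν w) {V : Set ℝ} (hV : IsClosed V)
    (hVmin : ∀ y ∈ V, ∃ w, G β ν w < G β ν y) :
    ∃ c > 0, ∃ R : ℝ, ∀ᶠ n : ℕ in atTop, ∀ s ∈ V,
      n * c + β / 8 * (s ^ 2 - R ^ 2) ≤ n * (G β (ρ n) s - G β ν m) := by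
  obtain ⟨a, ha, hgap⟩ := (continuous_G hν β).exists_forall_add_le_of_isClosed
    (tendsto_G_cocompact hβ hν) hV hVmin hm
  obtain ⟨R, htail⟩ := exists_forall_le_mul_sq (k := β / 8) (by positivity)
    (β * (2 + ∫ t, |t| ∂ν) + G β ν m + 1)
  have hclose : ∀ᶠ n : ℕ in atTop, ∀ s ∈ Set.Icc (-R) R, dist (F β ν s) (F β (ρ n) s) < a / 2 :=
    Metric.tendstoUniformlyOn_iff.1 (tendstoUniformlyOn_F hν hρ hF isCompact_Icc) _ (half_pos ha)
  have hmoment : ∀ᶠ n : ℕ in atTop, ∫ t, |t| ∂ρ n ≤ ∫ t, |t| ∂ν + 1 :=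
    hA.eventually (eventually_le_nhds (lt_add_one _))
  refine ⟨min (a / 2) 1, by positivity, R, ?_⟩
  filter_upwards [hclose, hmoment, eventually_ge_atTop 1] with n hclose_n hmom_n hn s hs
  have hn1 : (1 : ℝ) ≤ n := by exact_mod_cast hn
  set c := min (a / 2) 1
  have hc1 : c ≤ 1 := min_le_right _ _
  rcases le_or_gt |s| R with hsR | hsR
  · have hclose_s := hclose_n s (abs_le.1 hsR)
    rw [Real.dist_eq, abs_lt] at hclose_s
    have hgap_s : c ≤ G β (ρ n) s - G β ν m := by
      have := hgap s hs
      rw [G_eq_sub_F β ν s] at this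
      rw [G_eq_sub_F]
      linarith [min_le_left (a / 2) 1]
    have hsR2 : s ^ 2 ≤ R ^ 2 := by simpa using pow_le_pow_left₀ (abs_nonneg s) hsR 2
    nlinarith
  · have hquad := quadratic_le_G (hρ n) hβ.le s
    have htail_s := htail s hsR.le
    have hmom_s : β * (1 + ∫ t, |t| ∂ρ n) ≤ β * (2 + ∫ t, |t| ∂ν) :=
      mul_le_mul_of_nonneg_left (by linarith) hβ.le
    have hsq : 0 ≤ β / 8 * s ^ 2 := by positivity
    nlinarith

theorem exists_eventually_integral_exp_le (hβ : 0 < β)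
    (hν : Integrable (fun t => |t|) ν) (hρ : ∀ n, Integrable (fun t => |t|) (ρ n))
    (hF : ∀ q : ℚ, Tendsto (fun n => F β (ρ n) q) atTop (𝓝 (F β ν q)))
    (hA : Tendsto (fun n => ∫ t, |t| ∂ρ n) atTop (𝓝 (∫ t, |t| ∂ν)))
    {m : ℝ} (hm : ∀ w, G β ν m ≤ G β ν w) {V : Set ℝ} (hV : IsClosed V)
    (hVmin : ∀ y ∈ V, ∃ w, G β ν w < G β ν y) :
    ∃ ε > 0, ∀ᶠ n : ℕ in atTop,
      ∫ s in V, exp (-n * (G β (ρ n) s - G β ν m)) ≤ exp (-n * ε) := by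
  obtain ⟨c, hc, R, hbound⟩ :=
    exists_eventually_mul_add_le_mul_G_sub hβ hν hρ hF hA hm hV hVmin
  have hgauss : Integrable (fun s => exp (-(β / 8 * (s ^ 2 - R ^ 2)))) (volume.restrict V) := by
    refine (((integrable_exp_neg_mul_sq (b := β / 8) (by positivity)).const_mul
      (exp (β / 8 * R ^ 2))).congr (.of_forall fun s => ?_)).restrict
    simp only [← exp_add]
    ring_nf
  refine exists_eventually_integral_exp_neg_mul_le hc hgauss ?_
  filter_upwards [hbound] with n hn
  exact (ae_restrict_iff' hV.measurableSet).2 (.of_forall hn)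

end Convergence

section StrongLaw

variable {ν : Measure ℝ} [IsProbabilityMeasure ν]

lemma IsProductMeasure.eq_infinitePi {μ : Measure (ℕ → ℝ)} (hμ : IsProductMeasure ν μ) :
    μ = Measure.infinitePi fun _ => ν := by
  refine Measure.eq_infinitePi _ fun s t ht => ?_
  obtain ⟨n, hn⟩ : ∃ n, s ⊆ Finset.range n :=
    ⟨s.sup id + 1, fun i hi =>
      Finset.mem_range.2 (Nat.lt_succ_of_le (Finset.le_sup (f := id) hi))⟩
  set t' : Fin n → Set ℝ := fun k => if (k : ℕ) ∈ s then t k else Set.univ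
  have hpre : Set.pi (↑s) t = (fun h (k : Fin n) => h k) ⁻¹' Set.univ.pi t' := by
    ext h
    simp only [Set.mem_pi, Finset.mem_coe, Set.mem_preimage, Set.mem_univ, true_implies, t']
    refine ⟨fun H k => ?_, fun H i hi => ?_⟩
    · split_ifs with hk
      exacts [H k hk, trivial]
    · simpa [hi] using H ⟨i, Finset.mem_range.1 (hn hi)⟩
  have ht' : MeasurableSet (Set.univ.pi t') :=
    .univ_pi fun k => by dsimp only [t']; split_ifs; exacts [ht _, .univ]
  rw [hpre, ← Measure.map_apply (by fun_prop) ht', hμ n, Measure.pi_pi,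
    Fin.prod_univ_eq_prod_range (fun k => ν (if k ∈ s then t k else Set.univ)) n]
  simp only [apply_ite ν, measure_univ]
  rw [Finset.prod_ite_mem, Finset.inter_eq_right.2 hn]

lemma ae_tendsto_integral_empiricalMeasure {f : ℝ → ℝ} (hf : Measurable f)
    (hint : Integrable f ν) :
    ∀ᵐ h ∂(Measure.infinitePi fun _ => ν),
      Tendsto (fun n => ∫ t, f t ∂(empiricalMeasure h n)) atTop (𝓝 (∫ t, f t ∂ν)) := by
  have hlaw : ∀ i, (Measure.infinitePi fun _ => ν).map (fun h : ℕ → ℝ => f (h i)) = ν.map f :=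
    fun i => by
      rw [← Function.comp_def f, ← Measure.map_map hf (measurable_pi_apply i),
        Measure.infinitePi_map_eval]
  have hint0 : Integrable (fun h : ℕ → ℝ => f (h 0)) (Measure.infinitePi fun _ => ν) :=
    (measurePreserving_eval_infinitePi _ 0).integrable_comp_of_integrable hint
  have hslln := strong_law_ae_real (fun i (h : ℕ → ℝ) => f (h i)) hint0
    (fun i j hij => (iIndepFun_infinitePi (X := fun _ => f) fun _ => hf).indepFun hij)
    (fun i => ⟨(hf.comp (measurable_pi_apply i)).aemeasurable,
      (hf.comp (measurable_pi_apply 0)).aemeasurable, by rw [hlaw, hlaw]⟩)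
  rw [← integral_map (measurable_pi_apply 0).aemeasurable hf.aestronglyMeasurable,
    Measure.infinitePi_map_eval] at hslln
  filter_upwards [hslln] with h hh
  simpa [integral_empiricalMeasure, Fin.sum_univ_eq_sum_range (fun i => f (h i)),
    div_eq_inv_mul] using hh

end StrongLaw

end RandomFieldCurieWeiss

open RandomFieldCurieWeiss

theorem integral_away_from_minima_general
    (β : ℝ) (hβ : 0 < β) (ν : Measure ℝ) [IsProbabilityMeasure ν]
    (hmom : Integrable (fun x : ℝ => |x|) ν)
    (μ : Measure (ℕ → ℝ)) (hμ : IsProductMeasure ν μ) :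
    ∀ᵐ h ∂μ, ∀ m : ℝ, (∀ w : ℝ, G β ν m ≤ G β ν w) →
      ∀ V : Set ℝ, IsClosed V → (∀ y ∈ V, ∃ w : ℝ, G β ν w < G β ν y) →
        ∃ ε > (0 : ℝ), ∀ᶠ n : ℕ in atTop,
          (∫ s in V, Real.exp (-(n : ℝ) * (Gn β h n s - G β ν m))) ≤
            Real.exp (-(n : ℝ) * ε) := by
  obtain rfl := hμ.eq_infinitePi
  have hF : ∀ᵐ h ∂(Measure.infinitePi fun _ => ν), ∀ q : ℚ,
      Tendsto (fun n => F β (empiricalMeasure h n) q) atTop (𝓝 (F β ν q)) :=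
    ae_all_iff.2 fun q => ae_tendsto_integral_empiricalMeasure
      (Real.lipschitzWith_log_cosh.continuous.comp (by fun_prop)).measurable
      (integrable_log_cosh_mul_add hmom β q)
  filter_upwards [hF, ae_tendsto_integral_empiricalMeasure continuous_abs.measurable hmom]
    with h hFh hAh m hm V hV hVmin
  simpa only [Gn_eq_G_empiricalMeasure] using exists_eventually_integral_exp_le hβ hmom
    (fun n => integrable_empiricalMeasure h n _) hFh hAh hm hV hVmin

/-- Exponential smallness of the integral away from the global minima
(Lemma 5.3 (ii) of the paper). -/
theorem integral_away_from_minima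
    (β : ℝ) (hβ : 0 < β) (ν : Measure ℝ) [IsProbabilityMeasure ν]
    (hmom : Integrable (fun x : ℝ => |x|) ν)
    (μ : Measure (ℕ → ℝ)) [IsProbabilityMeasure μ] (hμ : IsProductMeasure ν μ) :
    ∀ᵐ h ∂μ, ∀ m : ℝ, (∀ w : ℝ, G β ν m ≤ G β ν w) →
      ∀ V : Set ℝ, IsClosed V → (∀ y ∈ V, ∃ w : ℝ, G β ν w < G β ν y) →
        ∃ ε > (0 : ℝ), ∀ᶠ n : ℕ in atTop,
          (∫ s in V, Real.exp (-(n : ℝ) * (Gn β h n s - G β ν m))) ≤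
            Real.exp (-(n : ℝ) * ε) :=
  integral_away_from_minima_general β hβ ν hmom μ hμ
end
end

section
/- Let k ≥ 1, λ > 0, a > 0, and fix α with 1 − 1/(2(2k−1)) < α < 1. Let (f_n) be a sequence of measurable functions ℝ → ℝ such that for all sufficiently large n one has f_n(s) ≥ P_{2k}(s) for all s ∈ [−a n^{1−α}, a n^{1−α}], where P_{2k}(s) = (λ/(2·(2k)!)) s^{2k} − Σ_{i=1}^{2k−1} |s|^i. Then for every K > 0 and every Borel set B ⊆ ℝ: limsup_n (1/n^{1−2k(1−α)}) ln ∫_{ {s ∈ B : K < |s| ≤ a n^{1−α}} } exp( −n^{1−2k(1−α)} f_n(s) ) ds ≤ − inf_{|s| > K} P_{2k}(s). -/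
open MeasureTheory ProbabilityTheory Real Filter Topology
open scoped ENNReal NNReal

noncomputable section

/-!
On the domain of integration `K < |s| ≤ R_n = a n^(1-α)` the hypothesis gives
`f_n ≥ P_{2k} ≥ m` for every real `m` below `inf_{|s|>K} P_{2k}`, so with the speed
`γ_n = n^(1-2k(1-α))` the integral is at most `2 R_n e^(-γ_n m)`. After taking logarithms and
dividing by `γ_n`, the volume contributes `log (2 R_n) / γ_n`, which vanishes because `γ_n` is a
positive power of `n` while `R_n` grows only polynomially; the condition on `α` is exactly what
makes the exponent of `γ_n` positive.
-/

lemma elog_ofReal_le_log {x y : ℝ} (h : x ≤ y) :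
    elog (ENNReal.ofReal x) ≤ (Real.log y : EReal) := by
  unfold elog
  rcases le_or_gt x 0 with hx | hx
  · simp [ENNReal.ofReal_eq_zero.2 hx]
  · rw [if_neg (by simp [hx.not_ge]), if_neg ENNReal.ofReal_ne_top, ENNReal.toReal_ofReal hx.le]
    exact_mod_cast Real.log_le_log hx h

section Laplace

variable {X : Type*} [MeasurableSpace X] {μ : Measure X}

lemma setIntegral_exp_neg_mul_le {A : Set X} (hA : MeasurableSet A) {V : ℝ} (hV₀ : 0 ≤ V)
    (hV : μ A ≤ ENNReal.ofReal V) {γ m : ℝ} (hγ : 0 ≤ γ) {g : X → ℝ} (hg : ∀ x ∈ A, m ≤ g x) :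
    ∫ x in A, exp (-γ * g x) ∂μ ≤ exp (-γ * m) * V := by
  have hA_fin : μ A ≠ ⊤ := ne_top_of_le_ne_top ENNReal.ofReal_ne_top hV
  calc ∫ x in A, exp (-γ * g x) ∂μ ≤ ∫ _ in A, exp (-γ * m) ∂μ := by
        refine integral_mono_of_nonneg (.of_forall fun x => (exp_pos _).le)
          (integrableOn_const hA_fin) ((ae_restrict_iff' hA).2 (.of_forall fun x hx => ?_))
        exact exp_le_exp.2 (by nlinarith [hg x hx])
    _ = μ.real A * exp (-γ * m) := by rw [setIntegral_const, smul_eq_mul]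
    _ ≤ V * exp (-γ * m) := by
        gcongr
        exact ENNReal.toReal_le_of_le_ofReal hV₀ hV
    _ = exp (-γ * m) * V := mul_comm _ _

lemma inv_mul_elog_setIntegral_exp_le {A : Set X} (hA : MeasurableSet A) {V : ℝ} (hV₀ : 0 < V)
    (hV : μ A ≤ ENNReal.ofReal V) {γ m : ℝ} (hγ : 0 < γ) {g : X → ℝ} (hg : ∀ x ∈ A, m ≤ g x) :
    ((γ⁻¹ : ℝ) : EReal) * elog (ENNReal.ofReal (∫ x in A, exp (-γ * g x) ∂μ)) ≤
      ((-m + Real.log V / γ : ℝ) : EReal) := by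
  have hlog : elog (ENNReal.ofReal (∫ x in A, exp (-γ * g x) ∂μ)) ≤
      (Real.log (exp (-γ * m) * V) : EReal) :=
    elog_ofReal_le_log (setIntegral_exp_neg_mul_le hA hV₀.le hV hγ.le hg)
  calc ((γ⁻¹ : ℝ) : EReal) * elog (ENNReal.ofReal (∫ x in A, exp (-γ * g x) ∂μ))
      ≤ ((γ⁻¹ : ℝ) : EReal) * (Real.log (exp (-γ * m) * V) : EReal) :=
        mul_le_mul_of_nonneg_left hlog (by exact_mod_cast (inv_pos.2 hγ).le)
    _ = ((-m + Real.log V / γ : ℝ) : EReal) := by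
        rw [← EReal.coe_mul, Real.log_mul (exp_ne_zero _) hV₀.ne', Real.log_exp]
        congr 1
        field_simp

theorem limsup_inv_mul_elog_setIntegral_exp_le {ι : Type*} {L : Filter ι} {A : ι → Set X}
    {f : ι → X → ℝ} {γ V : ι → ℝ} {m : ℝ} (hA : ∀ i, MeasurableSet (A i))
    (hV : ∀ i, μ (A i) ≤ ENNReal.ofReal (V i)) (hV₀ : ∀ᶠ i in L, 0 < V i)
    (hγ : ∀ᶠ i in L, 0 < γ i) (hlogV : Tendsto (fun i => Real.log (V i) / γ i) L (𝓝 0))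
    (hm : ∀ᶠ i in L, ∀ x ∈ A i, m ≤ f i x) :
    limsup (fun i => (((γ i)⁻¹ : ℝ) : EReal) *
        elog (ENNReal.ofReal (∫ x in A i, exp (-γ i * f i x) ∂μ))) L ≤ ((-m : ℝ) : EReal) := by
  rcases L.eq_or_neBot with rfl | hL
  · simp
  have hbound := EReal.tendsto_coe.2 (by simpa using hlogV.const_add (-m))
  calc _ ≤ limsup (fun i => ((-m + Real.log (V i) / γ i : ℝ) : EReal)) L := by
        refine limsup_le_limsup ?_
        filter_upwards [hV₀, hγ, hm] with i hVi hγi hmi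
        exact inv_mul_elog_setIntegral_exp_le (hA i) hVi (hV i) hγi hmi
    _ = ((-m : ℝ) : EReal) := hbound.limsup_eq

end Laplace

lemma tendsto_log_mul_rpow_div_rpow_atTop {c p β : ℝ} (hc : 0 < c) (hβ : 0 < β) :
    Tendsto (fun x : ℝ => Real.log (c * x ^ p) / x ^ β) atTop (𝓝 0) := by
  have hconst : Tendsto (fun x : ℝ => Real.log c * x ^ (-β)) atTop (𝓝 0) := by
    simpa using (tendsto_rpow_neg_atTop hβ).const_mul (Real.log c)
  have hlog : Tendsto (fun x : ℝ => p * (Real.log x / x ^ β)) atTop (𝓝 0) := by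
    simpa using ((isLittleO_log_rpow_atTop hβ).tendsto_div_nhds_zero).const_mul p
  refine (zero_add (0 : ℝ) ▸ hconst.add hlog).congr' ?_
  filter_upwards [eventually_gt_atTop 0] with x hx
  rw [Real.log_mul hc.ne' (by positivity), Real.log_rpow hx, rpow_neg hx.le]
  field_simp

lemma one_sub_two_mul_mul_one_sub_pos {k : ℕ} {α : ℝ}
    (hα1 : 1 - 1 / (2 * (2 * (k : ℝ) - 1)) < α) (hα2 : α < 1) :
    0 < 1 - 2 * (k : ℝ) * (1 - α) := by
  rcases Nat.eq_zero_or_pos k with rfl | hk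
  · norm_num
  have hk1 : (1 : ℝ) ≤ k := by exact_mod_cast hk
  have hd : (0 : ℝ) < 2 * (2 * (k : ℝ) - 1) := by linarith
  have h : (1 - α) * (2 * (2 * (k : ℝ) - 1)) < 1 := (lt_div_iff₀ hd).1 (by linarith)
  nlinarith

theorem laplace_upper_bound_away_general
    (k : ℕ) (l : ℝ) (a : ℝ) (ha : 0 < a)
    (α : ℝ) (hα1 : 1 - 1 / (2 * (2 * (k : ℝ) - 1)) < α) (hα2 : α < 1)
    (f : ℕ → ℝ → ℝ)
    (hbound : ∀ᶠ n : ℕ in atTop, ∀ s : ℝ,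
      s ∈ Set.Icc (-(a * (n : ℝ) ^ (1 - α))) (a * (n : ℝ) ^ (1 - α)) → P2k l k s ≤ f n s) :
    ∀ K > (0 : ℝ), ∀ B : Set ℝ, MeasurableSet B →
      limsup (fun n : ℕ => ((((n : ℝ) ^ (1 - 2 * (k : ℝ) * (1 - α)))⁻¹ : ℝ) : EReal) *
          elog (ENNReal.ofReal
            (∫ s in {s : ℝ | s ∈ B ∧ K < |s| ∧ |s| ≤ a * (n : ℝ) ^ (1 - α)},
              Real.exp (-(n : ℝ) ^ (1 - 2 * (k : ℝ) * (1 - α)) * f n s)))) atTop ≤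
        -(⨅ s ∈ {s : ℝ | K < |s|}, ((P2k l k s : ℝ) : EReal)) := by
  intro K _ B hB
  have hβ := one_sub_two_mul_mul_one_sub_pos hα1 hα2
  refine EReal.le_neg.2 (EReal.ge_of_forall_gt_iff_ge.1 fun m hm => EReal.le_neg.1 ?_)
  have hmP : ∀ s, K < |s| → m ≤ P2k l k s := fun s hs =>
    by exact_mod_cast hm.le.trans (iInf₂_le s hs)
  refine limsup_inv_mul_elog_setIntegral_exp_le (V := fun n : ℕ => 2 * a * (n : ℝ) ^ (1 - α))
    (fun n => hB.inter ((measurableSet_lt measurable_const measurable_abs).inter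
      (measurableSet_le measurable_abs measurable_const))) (fun n => ?_) ?_ ?_
    ((tendsto_log_mul_rpow_div_rpow_atTop (by positivity) hβ).comp tendsto_natCast_atTop_atTop) ?_
  · calc volume _ ≤ volume (Set.Icc (-(a * (n : ℝ) ^ (1 - α))) (a * (n : ℝ) ^ (1 - α))) :=
          measure_mono fun s hs => abs_le.1 hs.2.2
      _ = ENNReal.ofReal (2 * a * (n : ℝ) ^ (1 - α)) := by rw [Real.volume_Icc]; ring_nf
  · filter_upwards [eventually_gt_atTop 0] with n hn
    positivity
  · filter_upwards [eventually_gt_atTop 0] with n hn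
    positivity
  · filter_upwards [hbound] with n hn s hs
    exact (hmP s hs.2.1).trans (hn s (abs_le.1 hs.2.2))

/-- Deterministic Laplace-type upper bound away from the origin
(display (6.6) of the paper). -/
theorem laplace_upper_bound_away
    (k : ℕ) (hk : 1 ≤ k) (l : ℝ) (hl : 0 < l) (a : ℝ) (ha : 0 < a)
    (α : ℝ) (hα1 : 1 - 1 / (2 * (2 * (k : ℝ) - 1)) < α) (hα2 : α < 1)
    (f : ℕ → ℝ → ℝ) (hf : ∀ n, Measurable (f n))
    (hbound : ∀ᶠ n : ℕ in atTop, ∀ s : ℝ,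
      s ∈ Set.Icc (-(a * (n : ℝ) ^ (1 - α))) (a * (n : ℝ) ^ (1 - α)) → P2k l k s ≤ f n s) :
    ∀ K > (0 : ℝ), ∀ B : Set ℝ, MeasurableSet B →
      limsup (fun n : ℕ => ((((n : ℝ) ^ (1 - 2 * (k : ℝ) * (1 - α)))⁻¹ : ℝ) : EReal) *
          elog (ENNReal.ofReal
            (∫ s in {s : ℝ | s ∈ B ∧ K < |s| ∧ |s| ≤ a * (n : ℝ) ^ (1 - α)},
              Real.exp (-(n : ℝ) ^ (1 - 2 * (k : ℝ) * (1 - α)) * f n s)))) atTop ≤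
        -(⨅ s ∈ {s : ℝ | K < |s|}, ((P2k l k s : ℝ) : EReal)) :=
  laplace_upper_bound_away_general k l a ha α hα1 hα2 f hbound
end
end

section
/- Suppose ν has a finite absolute first moment. Then the set of global minima of G is non-empty and finite; in particular G attains its infimum over ℝ at finitely many points. -/
/-!
The derivative `G' x = β x - β ∫ tanh (β x + β h) dν(h)` is real analytic: the integral extends
holomorphically to the strip `|Im z| < π / 4`, where `‖cosh z‖² - ‖sinh z‖² = cos (2 Im z) > 0`
keeps `tanh` bounded by `1` and so dominates its derivative `1 - tanh²`. Since
`log cosh t ≤ |t|`, the first moment gives `G x ≥ β/2 x² - O(|x|)`, so `G` is coercive and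
attains its minimum. Infinitely many minimisers would accumulate in a compact set; `G'` would
vanish there, hence everywhere, and `G` would be constant, contradicting coercivity.
-/

open MeasureTheory ProbabilityTheory Real Filter Topology
open scoped ENNReal NNReal

noncomputable section

namespace Real

@[fun_prop]
theorem continuous_tanh : Continuous tanh := by
  rw [show tanh = fun x => sinh x / cosh x from funext tanh_eq_sinh_div_cosh]
  exact continuous_sinh.div continuous_cosh fun x => (cosh_pos x).ne'

theorem log_cosh_le_abs (t : ℝ) : log (cosh t) ≤ |t| := by
  rw [← cosh_abs, log_le_iff_le_exp (cosh_pos _), cosh_eq]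
  linarith [exp_le_exp.mpr (neg_le_self (abs_nonneg t))]

end Real

namespace Complex

theorem norm_cosh_sq_sub_norm_sinh_sq (z : ℂ) :
    ‖cosh z‖ ^ 2 - ‖sinh z‖ ^ 2 = Real.cos (2 * z.im) := by
  have hcosh : cosh z =
      ↑(Real.cosh z.re * Real.cos z.im) + ↑(Real.sinh z.re * Real.sin z.im) * I := by
    conv_lhs => rw [← re_add_im z]
    rw [cosh_add, cosh_mul_I, sinh_mul_I]
    push_cast
    ring
  have hsinh : sinh z =
      ↑(Real.sinh z.re * Real.cos z.im) + ↑(Real.cosh z.re * Real.sin z.im) * I := by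
    conv_lhs => rw [← re_add_im z]
    rw [sinh_add, cosh_mul_I, sinh_mul_I]
    push_cast
    ring
  rw [hcosh, hsinh, Complex.sq_norm, Complex.sq_norm, normSq_add_mul_I, normSq_add_mul_I,
    Real.cos_two_mul]
  linear_combination
    (Real.cos z.im ^ 2 - Real.sin z.im ^ 2) * Real.cosh_sq z.re - Real.sin_sq_add_cos_sq z.im

theorem cosh_ne_zero_of_abs_im_lt {z : ℂ} (hz : |z.im| < π / 4) : cosh z ≠ 0 := by
  have hcos : 0 < Real.cos (2 * z.im) := Real.cos_pos_of_mem_Ioo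
    ⟨by linarith [neg_abs_le z.im], by linarith [le_abs_self z.im]⟩
  intro h
  have hnorm := norm_cosh_sq_sub_norm_sinh_sq z
  rw [h, norm_zero] at hnorm
  nlinarith [sq_nonneg ‖sinh z‖]

theorem norm_tanh_le_one {z : ℂ} (hz : |z.im| ≤ π / 4) : ‖tanh z‖ ≤ 1 := by
  have hcos : 0 ≤ Real.cos (2 * z.im) := Real.cos_nonneg_of_mem_Icc
    ⟨by linarith [neg_abs_le z.im], by linarith [le_abs_self z.im]⟩
  have hnorm_le : ‖sinh z‖ ≤ ‖cosh z‖ :=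
    (pow_le_pow_iff_left₀ (norm_nonneg _) (norm_nonneg _) two_ne_zero).mp
      (by linarith [norm_cosh_sq_sub_norm_sinh_sq z])
  rw [tanh_eq_sinh_div_cosh, norm_div]
  exact div_le_one_of_le₀ hnorm_le (norm_nonneg _)

theorem hasDerivAt_tanh {z : ℂ} (hz : cosh z ≠ 0) : HasDerivAt tanh (1 - tanh z ^ 2) z := by
  rw [show tanh = fun w => sinh w / cosh w from funext tanh_eq_sinh_div_cosh]
  refine ((hasDerivAt_sinh z).div (hasDerivAt_cosh z) hz).congr_deriv ?_
  field_simp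

end Complex

section TanhIntegral

variable {α : Type*} [MeasurableSpace α] {μ : Measure α} [IsFiniteMeasure μ] {f : α → ℝ}

theorem hasDerivAt_integral_tanh_add (hf : Measurable f) {z : ℂ} (hz : |z.im| < π / 4) :
    HasDerivAt (fun w : ℂ => ∫ a, Complex.tanh (w + f a) ∂μ)
      (∫ a, (1 - Complex.tanh (z + f a) ^ 2) ∂μ) z := by
  have hstrip : {w : ℂ | |w.im| < π / 4} ∈ 𝓝 z :=
    (isOpen_lt (by fun_prop) continuous_const).mem_nhds hz
  have hmeas (w : ℂ) : AEStronglyMeasurable (fun a => Complex.tanh (w + f a)) μ :=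
    (by fun_prop : Measurable fun a => Complex.tanh (w + f a)).aestronglyMeasurable
  have hmeas' : AEStronglyMeasurable (fun a => 1 - Complex.tanh (z + f a) ^ 2) μ :=
    (by fun_prop : Measurable fun a => 1 - Complex.tanh (z + f a) ^ 2).aestronglyMeasurable
  refine (hasDerivAt_integral_of_dominated_loc_of_deriv_le (bound := fun _ => 2)
    (F' := fun w a => 1 - Complex.tanh (w + f a) ^ 2) hstrip (.of_forall hmeas) ?_ hmeas' ?_
    (integrable_const 2) ?_).2
  · refine .of_bound (hmeas z) 1 (.of_forall fun a => ?_)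
    exact Complex.norm_tanh_le_one (z := z + f a) (by simpa using hz.le)
  · refine .of_forall fun a w (hw : |w.im| < π / 4) => ?_
    have htanh := Complex.norm_tanh_le_one (z := w + f a) (by simpa using hw.le)
    calc ‖1 - Complex.tanh (w + f a) ^ 2‖
        ≤ ‖(1 : ℂ)‖ + ‖Complex.tanh (w + f a)‖ ^ 2 := by
          rw [← norm_pow]
          exact norm_sub_le _ _
      _ ≤ 2 := by
          rw [norm_one]
          nlinarith [norm_nonneg (Complex.tanh (w + f a))]
  · refine .of_forall fun a w (hw : |w.im| < π / 4) => ?_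
    exact .comp_add_const w _ <| Complex.hasDerivAt_tanh <|
      Complex.cosh_ne_zero_of_abs_im_lt (z := w + f a) (by simpa using hw)

theorem analyticOnNhd_integral_tanh_add (hf : Measurable f) :
    AnalyticOnNhd ℝ (fun x : ℝ => ∫ a, Real.tanh (x + f a) ∂μ) Set.univ := by
  set F : ℂ → ℂ := fun w => ∫ a, Complex.tanh (w + f a) ∂μ
  have hF : AnalyticOnNhd ℂ F {w : ℂ | |w.im| < π / 4} :=
    DifferentiableOn.analyticOnNhd
      (fun w hw => (hasDerivAt_integral_tanh_add hf hw).differentiableAt.differentiableWithinAt)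
      (isOpen_lt (by fun_prop) continuous_const)
  have hre : (fun x : ℝ => ∫ a, Real.tanh (x + f a) ∂μ) = fun x : ℝ => (F x).re := by
    funext x
    simp only [F, ← Complex.ofReal_add, ← Complex.ofReal_tanh]
    rw [integral_complex_ofReal, Complex.ofReal_re]
  intro x _
  rw [hre]
  have hx : AnalyticAt ℂ F x := hF x (by simp [pi_pos])
  exact (Complex.reCLM.analyticAt _).comp
    (hx.restrictScalars.comp (Complex.ofRealCLM.analyticAt x))

end TanhIntegral

theorem finite_setOf_forall_le_of_analyticOnNhd_deriv {f : ℝ → ℝ} (hf : Differentiable ℝ f)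
    (hf' : AnalyticOnNhd ℝ (deriv f) Set.univ) (htop : Tendsto f (cocompact ℝ) atTop) :
    {m | ∀ w, f m ≤ f w}.Finite := by
  obtain ⟨K, hK, hKf⟩ := mem_cocompact.mp (htop.eventually_gt_atTop (f 0))
  have hsub : {m | ∀ w, f m ≤ f w} ⊆ K := fun m hm =>
    by_contra fun hmK => (hm 0).not_gt (hKf hmK)
  by_contra hinf
  obtain ⟨z₀, -, hz₀⟩ := Set.Infinite.exists_accPt_of_subset_isCompact hinf hK hsub
  have hcrit : ∃ᶠ z in 𝓝[≠] z₀, deriv f z = 0 :=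
    (frequently_mem_iff_neBot.mpr hz₀).mono fun m hm =>
      IsLocalMin.deriv_eq_zero (.of_forall hm)
  have hconst := is_const_of_deriv_eq_zero hf fun x =>
    hf'.eqOn_zero_of_preconnected_of_frequently_eq_zero isPreconnected_univ (Set.mem_univ z₀)
      hcrit (Set.mem_univ x)
  exact not_tendsto_const_atTop (f 0) _ (htop.congr fun x => hconst x 0)

theorem abs_log_cosh_mul_add_le (β x h : ℝ) :
    |log (cosh (β * (x + h)))| ≤ |β| * |x| + |β| * |h| := by
  rw [abs_of_nonneg (log_nonneg (one_le_cosh _)), ← mul_add]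
  exact (log_cosh_le_abs _).trans (by rw [abs_mul]; gcongr; exact abs_add_le x h)

section FreeEnergy

variable {β : ℝ} {ν : Measure ℝ} [IsFiniteMeasure ν]

theorem integrable_log_cosh_mul_add (hmom : Integrable (fun h : ℝ => |h|) ν) (x : ℝ) :
    Integrable (fun h => log (cosh (β * (x + h)))) ν :=
  ((integrable_const _).add (hmom.const_mul |β|)).mono'
    (by fun_prop : Measurable fun h => log (cosh (β * (x + h)))).aestronglyMeasurable
    (.of_forall fun h => abs_log_cosh_mul_add_le β x h)

theorem hasDerivAt_G (hmom : Integrable (fun h : ℝ => |h|) ν) (x : ℝ) :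
    HasDerivAt (G β ν) (β * x - β * ∫ h, tanh (β * x + β * h) ∂ν) x := by
  have hquad : HasDerivAt (fun y => β / 2 * y ^ 2) (β * x) x :=
    ((hasDerivAt_pow 2 x).const_mul (β / 2)).congr_deriv (by ring)
  have hlog (h y : ℝ) :
      HasDerivAt (fun y => log (cosh (β * (y + h)))) (β * tanh (β * y + β * h)) y := by
    refine ((((hasDerivAt_id' y).add_const h).const_mul β).cosh.log
      (cosh_pos _).ne').congr_deriv ?_
    rw [tanh_eq_sinh_div_cosh, mul_add]
    field_simp
  have hint := hasDerivAt_integral_of_dominated_loc_of_deriv_le (bound := fun _ => |β|)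
    (F' := fun y h => β * tanh (β * y + β * h)) univ_mem
    (.of_forall fun y => (integrable_log_cosh_mul_add hmom y).aestronglyMeasurable)
    (integrable_log_cosh_mul_add hmom x) (by fun_prop)
    (.of_forall fun h y _ => by
      rw [norm_mul, norm_eq_abs, norm_eq_abs]
      exact mul_le_of_le_one_right (abs_nonneg β) (abs_tanh_lt_one _).le)
    (integrable_const _) (.of_forall fun h y _ => hlog h y)
  rw [← integral_const_mul]
  exact hquad.sub hint.2

theorem analyticOnNhd_deriv_G (hmom : Integrable (fun h : ℝ => |h|) ν) :
    AnalyticOnNhd ℝ (deriv (G β ν)) Set.univ := by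
  rw [show deriv (G β ν) = _ from funext fun x => (hasDerivAt_G hmom x).deriv]
  have htanh := analyticOnNhd_integral_tanh_add (μ := ν) (measurable_const_mul β)
  intro x _
  exact (analyticAt_const.mul analyticAt_id).sub
    (analyticAt_const.mul ((htanh _ trivial).comp (analyticAt_const.mul analyticAt_id)))

theorem quadratic_le_G (hmom : Integrable (fun h : ℝ => |h|) ν) (x : ℝ) :
    β / 2 * x ^ 2 - (|β| * ν.real Set.univ * |x| + |β| * ∫ h, |h| ∂ν) ≤ G β ν x := by
  have hle : ∫ h, log (cosh (β * (x + h))) ∂ν ≤ ∫ h, (|β| * |x| + |β| * |h|) ∂ν :=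
    integral_mono (integrable_log_cosh_mul_add hmom x)
      ((integrable_const _).add (hmom.const_mul _))
      fun h => (le_abs_self _).trans (abs_log_cosh_mul_add_le β x h)
  rw [integral_add (integrable_const _) (hmom.const_mul _), integral_const, integral_const_mul,
    smul_eq_mul] at hle
  rw [G]
  linarith

theorem tendsto_G_cocompact (hβ : 0 < β) (hmom : Integrable (fun h : ℝ => |h|) ν) :
    Tendsto (G β ν) (cocompact ℝ) atTop := by
  set a := |β| * ν.real Set.univ
  set b := |β| * ∫ h, |h| ∂ν
  have hpoly : Tendsto (fun t : ℝ => t * (β / 2 * t - a) - b) atTop atTop :=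
    tendsto_atTop_add_const_right _ _ <| tendsto_id.atTop_mul_atTop₀ <|
      tendsto_atTop_add_const_right _ _ (tendsto_id.const_mul_atTop (by positivity))
  refine tendsto_atTop_mono (fun x => ?_) (hpoly.comp (tendsto_norm_cocompact_atTop (E := ℝ)))
  have hx := quadratic_le_G (β := β) hmom x
  rw [← sq_abs x] at hx
  simp only [Function.comp_apply, Real.norm_eq_abs]
  linarith

end FreeEnergy

/-- The set of global minima of `G` is non-empty and finite. -/
theorem global_minima_nonempty_finite
    (β : ℝ) (hβ : 0 < β) (ν : Measure ℝ) [IsProbabilityMeasure ν]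
    (hmom : Integrable (fun x : ℝ => |x|) ν) :
    {m : ℝ | ∀ w : ℝ, G β ν m ≤ G β ν w}.Nonempty ∧
      {m : ℝ | ∀ w : ℝ, G β ν m ≤ G β ν w}.Finite := by
  have hG := tendsto_G_cocompact hβ hmom
  have hdiff : Differentiable ℝ (G β ν) := fun x => (hasDerivAt_G hmom x).differentiableAt
  exact ⟨hdiff.continuous.exists_forall_le hG,
    finite_setOf_forall_le_of_analyticOnNhd_deriv hdiff (analyticOnNhd_deriv_G hmom) hG⟩
end
end
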